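/- Let B be a clean bidirected graph rooted at r, let x ≠ r be a vertex of B, and let P and Q be two families of pairwise internally vertex-disjoint r–x paths in B. Then there exists a family R of pairwise internally vertex-disjoint r–x paths in B such that every first edge of a path in P is the first edge of some path in R, and every last edge of a path in Q is the last edge of some path in R. -/

import Mathlib

/-- A bidirected graph: a loopless multigraph together with a signing of each
half-edge (edge-endpoint incidence) by a sign (`true` = `+`, `false` = `-`). -/
structure BidirGraph (V : Type) (E : Type) where
  ends : E → V × V
  sign : E → V → Bool
  loopless : ∀ e : E, (ends e).1 ≠ (ends e).2

namespace BidirGraph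

variable {V E : Type}

/-- The head of an oriented edge `(e, b)`: `b = true` orients `e` from its first
endpoint to its second endpoint. -/
def ohead (B : BidirGraph V E) (oe : E × Bool) : V :=
  if oe.2 then (B.ends oe.1).2 else (B.ends oe.1).1

/-- The tail of an oriented edge. -/
def otail (B : BidirGraph V E) (oe : E × Bool) : V :=
  if oe.2 then (B.ends oe.1).1 else (B.ends oe.1).2

/-- `e` is incident with `v`. -/
def Incident (B : BidirGraph V E) (e : E) (v : V) : Prop :=
  (B.ends e).1 = v ∨ (B.ends e).2 = v

/-- `L` is a trail starting at `v`: a sequence of oriented edges, with no repeated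
underlying edge, consecutive edges sharing a vertex at which they have opposite signs. -/
def IsTrailFrom (B : BidirGraph V E) (v : V) (L : List (E × Bool)) : Prop :=
  (L.map Prod.fst).Nodup ∧
  (∀ oe ∈ L.head?, B.otail oe = v) ∧
  L.Chain' (fun a b => B.ohead a = B.otail b ∧ B.sign a.1 (B.ohead a) ≠ B.sign b.1 (B.ohead a))

/-- The final vertex of a trail starting at `v`. -/
def trailEnd (B : BidirGraph V E) (v : V) (L : List (E × Bool)) : V :=
  match L.getLast? with
  | none => v
  | some oe => B.ohead oe

/-- The internal vertices of a trail: the heads of all edges except the last one. -/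
def Internal (B : BidirGraph V E) (L : List (E × Bool)) : List V :=
  (L.map B.ohead).dropLast

/-- An `r`-trail: a trail starting at `r` with no internal vertex equal to `r`. -/
def IsRTrail (B : BidirGraph V E) (r : V) (L : List (E × Bool)) : Prop :=
  B.IsTrailFrom r L ∧ ∀ v ∈ B.Internal L, v ≠ r

/-- The trail `L` ends at vertex `w` with sign `α`. -/
def EndsAtSigned (B : BidirGraph V E) (L : List (E × Bool)) (w : V) (α : Bool) : Prop :=
  ∃ oe, L.getLast? = some oe ∧ B.ohead oe = w ∧ B.sign oe.1 w = α

/-- A path: a trail with no repeated vertex. -/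
def IsPathFrom (B : BidirGraph V E) (v : V) (L : List (E × Bool)) : Prop :=
  B.IsTrailFrom v L ∧ (v :: L.map B.ohead).Nodup

/-- An almost path: a trail that is trivial or becomes a path after removing its last edge. -/
def IsAlmostPathFrom (B : BidirGraph V E) (v : V) (L : List (E × Bool)) : Prop :=
  B.IsTrailFrom v L ∧ (v :: B.Internal L).Nodup

/-- An edge is trail-undirectable if there are `r`-trails ending in both of its orientations. -/
def TrailUndirectable (B : BidirGraph V E) (r : V) (e : E) : Prop :=
  (∃ L, B.IsRTrail r L ∧ L.getLast? = some (e, true)) ∧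
  (∃ L, B.IsRTrail r L ∧ L.getLast? = some (e, false))

/-- `(e, b)` is the natural orientation of the trail-directable edge `e`: `r`-trails end
in the orientation `(e, b)` but not in the opposite orientation. -/
def NatOrient (B : BidirGraph V E) (r : V) (e : E) (b : Bool) : Prop :=
  (∃ L, B.IsRTrail r L ∧ L.getLast? = some (e, b)) ∧
  ¬ ∃ L, B.IsRTrail r L ∧ L.getLast? = some (e, !b)

/-- An edge is trail-directable if exactly one of its orientations is the final oriented
edge of some `r`-trail. -/
def TrailDirectable (B : BidirGraph V E) (r : V) (e : E) : Prop :=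
  ∃ b, B.NatOrient r e b

/-- `B` is trail-reachable: every edge is the final edge of some `r`-trail. -/
def TrailReachable (B : BidirGraph V E) (r : V) : Prop :=
  ∀ e : E, ∃ L b, B.IsRTrail r L ∧ L.getLast? = some (e, b)

/-- Adjacency of trail-undirectable edges: both undirectable and sharing an endpoint. -/
def UStep (B : BidirGraph V E) (r : V) (a b : E) : Prop :=
  B.TrailUndirectable r a ∧ B.TrailUndirectable r b ∧ ∃ v, B.Incident a v ∧ B.Incident b v

/-- `C` is (the edge set of) a nontrivial trail-undirectable component of `B`: the set of
trail-undirectable edges connected to some trail-undirectable edge `e` inside the subgraph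
induced by the trail-undirectable edges. -/
def IsUComp (B : BidirGraph V E) (r : V) (C : Set E) : Prop :=
  ∃ e, B.TrailUndirectable r e ∧ C = {f | Relation.ReflTransGen (B.UStep r) e f}

/-- `v` is a vertex of the edge set `C` (i.e. an endpoint of one of its edges). -/
def VC (B : BidirGraph V E) (C : Set E) (v : V) : Prop :=
  ∃ e ∈ C, B.Incident e v

/-- `B` is edge-clean: the root lies in no nontrivial trail-undirectable component. -/
def EdgeClean (B : BidirGraph V E) (r : V) : Prop :=
  ¬ ∃ C : Set E, B.IsUComp r C ∧ B.VC C r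

/-- `B` is clean: there is no nontrivial almost path starting and ending at `r`. -/
def Clean (B : BidirGraph V E) (r : V) : Prop :=
  ¬ ∃ L, L ≠ ([] : List (E × Bool)) ∧ B.IsAlmostPathFrom r L ∧ B.trailEnd r L = r

/-- A vertex is trail-solid if it is the root, or the head of the natural orientation of a
trail-directable edge, or incident with no trail-undirectable edge. -/
def TrailSolid (B : BidirGraph V E) (r v : V) : Prop :=
  v = r ∨ (∃ e b, B.NatOrient r e b ∧ B.ohead (e, b) = v) ∨
    (∀ e : E, B.Incident e v → ¬ B.TrailUndirectable r e)

/-- Two trails are edge-disjoint if no underlying edge occurs in both. -/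
def EdgeDisj (L₁ L₂ : List (E × Bool)) : Prop :=
  ∀ (e : E) (b₁ b₂ : Bool), (e, b₁) ∈ L₁ → (e, b₂) ∈ L₂ → False

/-- Two paths are internally vertex-disjoint if they share no internal vertex. -/
def IntDisj (B : BidirGraph V E) (L₁ L₂ : List (E × Bool)) : Prop :=
  ∀ w : V, w ∈ B.Internal L₁ → w ∈ B.Internal L₂ → False

end BidirGraph

/-!
Pym's exchange argument, run on a linkage of `r`–`x` paths that starts as `Q`. Each of its paths
is kept split into an initial segment of some `P i` and a remainder. While some first edge of `P`
is missing, walk along the corresponding `P i` from `r`. If it avoids the interiors of all paths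
of the linkage, add it. Otherwise let `v` be the first interior vertex of a path `M` it reaches,
and replace `M` by `P i` up to `v` followed by `M` after `v`, which keeps the last edge of `M`.
Cleanness makes the splice a path: the two pieces arrive at `v` with the same sign, since
otherwise `P i` up to `v` followed by `M` back from `v` to `r` would be a closed almost path
at `r`. The disjointness of the `P i` forces `v` onto the remainder of `M`, so each replacement
shortens the total remainder, and each addition covers a new first edge.
-/

lemma List.exists_eq_append_cons_of_exists {α : Type*} {l : List α} {p : α → Prop}
    (h : ∃ a ∈ l, p a) : ∃ as b bs, l = as ++ b :: bs ∧ p b ∧ ∀ a ∈ as, ¬p a := by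
  classical
  obtain ⟨b, hb⟩ := Option.isSome_iff_exists.mp
    (List.find?_isSome.mpr (by simpa using h) : (l.find? fun a => decide (p a)).isSome)
  obtain ⟨hpb, as, bs, hl, has⟩ := List.find?_eq_some_iff_append.mp hb
  exact ⟨as, b, bs, hl, by simpa using hpb, fun a ha => by simpa using has a ha⟩

namespace BidirGraph

variable {V E : Type} {B : BidirGraph V E} {r v w x : V} {L L₁ L₂ M M₁ M₂ : List (E × Bool)}
  {a b : E × Bool}

def TrailStep (B : BidirGraph V E) (a b : E × Bool) : Prop :=
  B.ohead a = B.otail b ∧ B.sign a.1 (B.ohead a) ≠ B.sign b.1 (B.ohead a)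

lemma isTrailFrom_iff :
    B.IsTrailFrom v L ↔ (L.map Prod.fst).Nodup ∧ (∀ oe ∈ L.head?, B.otail oe = v) ∧
      L.IsChain B.TrailStep :=
  Iff.rfl

lemma ohead_eq_or_ohead_eq_otail_of_fst_eq (h : a.1 = b.1) :
    B.ohead a = B.ohead b ∨ B.ohead a = B.otail b := by
  obtain ⟨e, s⟩ := a
  obtain ⟨e', t⟩ := b
  subst h
  cases s <;> cases t <;> simp [ohead, otail]

lemma trailEnd_of_getLast? (h : L.getLast? = some a) : B.trailEnd v L = B.ohead a := by
  simp [trailEnd, h]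

lemma trailEnd_append : B.trailEnd v (L₁ ++ L₂) = B.trailEnd (B.trailEnd v L₁) L₂ := by
  cases h : L₂.getLast? <;> simp_all [trailEnd]

lemma trailEnd_mem_map_ohead (h : L ≠ []) : B.trailEnd v L ∈ L.map B.ohead := by
  rw [trailEnd_of_getLast? (List.getLast?_eq_some_getLast h)]
  exact List.mem_map_of_mem (List.getLast_mem h)

lemma IsTrailFrom.map_otail (h : B.IsTrailFrom v L) :
    L.map B.otail = (v :: L.map B.ohead).dropLast := by
  induction L generalizing v with
  | nil => rfl
  | cons a L ih =>
    obtain ⟨hnd, hstart, hchain⟩ := h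
    have hL : B.IsTrailFrom (B.ohead a) L := by
      refine ⟨(List.nodup_cons.mp hnd).2, fun b hb => ?_, hchain.tail⟩
      cases L with
      | nil => simp at hb
      | cons c L => cases hb; exact ((List.isChain_cons_cons.mp hchain).1).1.symm
    rw [List.map_cons, ih hL, hstart a rfl]
    cases L <;> simp

lemma IsTrailFrom.otail_mem (h : B.IsTrailFrom v L) (ha : a ∈ L) :
    B.otail a ∈ v :: L.map B.ohead :=
  (List.dropLast_sublist _).mem (h.map_otail ▸ List.mem_map_of_mem ha)

lemma isTrailFrom_append :
    B.IsTrailFrom v (L₁ ++ L₂) ↔ B.IsTrailFrom v L₁ ∧ B.IsTrailFrom (B.trailEnd v L₁) L₂ ∧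
      (∀ a ∈ L₁.getLast?, ∀ b ∈ L₂.head?, B.TrailStep a b) ∧
      ∀ e ∈ L₁.map Prod.fst, ∀ f ∈ L₂.map Prod.fst, e ≠ f := by
  rcases L₁.eq_nil_or_concat with rfl | ⟨L₁, a, rfl⟩
  · simp [isTrailFrom_iff, trailEnd]
  rw [List.concat_eq_append]
  have hhead : (L₁ ++ [a] ++ L₂).head? = (L₁ ++ [a]).head? := by
    cases L₁ <;> simp
  simp only [isTrailFrom_iff, List.map_append, List.nodup_append, List.isChain_append, hhead,
    trailEnd_of_getLast? List.getLast?_concat, List.getLast?_concat, Option.mem_def,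
    Option.some.injEq, forall_eq']
  constructor
  · rintro ⟨⟨hnd₁, hnd₂, hdisj⟩, hstart, hch₁, hch₂, hjoin⟩
    exact ⟨⟨hnd₁, hstart, hch₁⟩, ⟨hnd₂, fun b hb => (hjoin b hb).1.symm, hch₂⟩, hjoin, hdisj⟩
  · rintro ⟨⟨hnd₁, hstart, hch₁⟩, ⟨hnd₂, -, hch₂⟩, hjoin, hdisj⟩
    exact ⟨⟨hnd₁, hnd₂, hdisj⟩, hstart, hch₁, hch₂, hjoin⟩

lemma internal_sublist : (B.Internal L).Sublist (L.map B.ohead) := List.dropLast_sublist _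

lemma internal_append (h : L₂ ≠ []) :
    B.Internal (L₁ ++ L₂) = L₁.map B.ohead ++ B.Internal L₂ := by
  simp [Internal, h]

lemma map_ohead_eq_internal_append (h : L ≠ []) :
    L.map B.ohead = B.Internal L ++ [B.trailEnd v L] := by
  conv_lhs => rw [← List.dropLast_concat_getLast h]
  simp [Internal, trailEnd_of_getLast? (List.getLast?_eq_some_getLast h)]

lemma mem_internal_of_mem_map_ohead (hw : w ∈ L.map B.ohead) (hne : w ≠ B.trailEnd v L) :
    w ∈ B.Internal L := by
  have hL : L ≠ [] := by rintro rfl; simp at hw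
  rw [map_ohead_eq_internal_append (v := v) hL] at hw
  simpa [hne] using hw

lemma IsPathFrom.nodup_map_ohead (h : B.IsPathFrom v L) : (L.map B.ohead).Nodup :=
  (List.nodup_cons.mp h.2).2

lemma IsPathFrom.notMem_map_ohead (h : B.IsPathFrom v L) : v ∉ L.map B.ohead :=
  (List.nodup_cons.mp h.2).1

lemma IsPathFrom.notMem_internal (h : B.IsPathFrom v L) : v ∉ B.Internal L :=
  fun hv => h.notMem_map_ohead (internal_sublist.mem hv)

lemma IsPathFrom.trailEnd_notMem_internal (h : B.IsPathFrom v L) :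
    B.trailEnd v L ∉ B.Internal L := by
  rcases eq_or_ne L [] with rfl | hL
  · simp [Internal]
  have hnd := h.nodup_map_ohead
  rw [map_ohead_eq_internal_append hL, List.nodup_append] at hnd
  exact fun hmem => hnd.2.2 _ hmem _ (List.mem_singleton_self _) rfl

lemma IsPathFrom.eq_of_ohead_eq (h : B.IsPathFrom v L) (ha : a ∈ L) (hb : b ∈ L)
    (hab : B.ohead a = B.ohead b) : a = b :=
  List.inj_on_of_nodup_map h.nodup_map_ohead ha hb hab

lemma IsPathFrom.append_left (h : B.IsPathFrom v (L₁ ++ L₂)) : B.IsPathFrom v L₁ :=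
  ⟨(isTrailFrom_append.mp h.1).1,
    h.2.sublist (((List.sublist_append_left _ _).map _).cons_cons v)⟩

lemma IntDisj.symm (h : B.IntDisj L M) : B.IntDisj M L :=
  fun w hM hL => h w hL hM

def reverseTrail (L : List (E × Bool)) : List (E × Bool) :=
  (L.map fun oe => (oe.1, !oe.2)).reverse

lemma ohead_flip : B.ohead (a.1, !a.2) = B.otail a := by
  obtain ⟨e, s⟩ := a
  cases s <;> simp [ohead, otail]

lemma otail_flip : B.otail (a.1, !a.2) = B.ohead a := by
  obtain ⟨e, s⟩ := a
  cases s <;> simp [ohead, otail]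

lemma map_fst_reverseTrail : (reverseTrail L).map Prod.fst = (L.map Prod.fst).reverse := by
  simp [reverseTrail, Function.comp_def]

lemma map_ohead_reverseTrail : (reverseTrail L).map B.ohead = (L.map B.otail).reverse := by
  simp [reverseTrail, Function.comp_def, ohead_flip]

lemma TrailStep.flip (h : B.TrailStep a b) : B.TrailStep (b.1, !b.2) (a.1, !a.2) := by
  refine ⟨by rw [ohead_flip, otail_flip, h.1], ?_⟩
  rw [ohead_flip, ← h.1]
  exact h.2.symm

lemma IsTrailFrom.reverseTrail (h : B.IsTrailFrom v L) :
    B.IsTrailFrom (B.trailEnd v L) (reverseTrail L) := by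
  obtain ⟨hnd, -, hchain⟩ := h
  refine ⟨map_fst_reverseTrail ▸ List.nodup_reverse.mpr hnd, fun oe hoe => ?_, ?_⟩
  · obtain ⟨a, ha, rfl⟩ : ∃ a, L.getLast? = some a ∧ (a.1, !a.2) = oe := by
      simpa [BidirGraph.reverseTrail, List.head?_reverse, List.getLast?_map] using hoe
    rw [otail_flip, trailEnd_of_getLast? ha]
  · change List.IsChain B.TrailStep _ at hchain ⊢
    rw [BidirGraph.reverseTrail, List.isChain_reverse, List.isChain_map]
    exact hchain.imp fun _ _ hab => hab.flip

lemma IsTrailFrom.trailEnd_reverseTrail (h : B.IsTrailFrom v L) :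
    B.trailEnd (B.trailEnd v L) (BidirGraph.reverseTrail L) = v := by
  cases hL : L.head? with
  | none => simp_all [trailEnd, BidirGraph.reverseTrail]
  | some a =>
    rw [trailEnd_of_getLast? (a := (a.1, !a.2)), ohead_flip, h.2.1 a hL]
    simp [BidirGraph.reverseTrail, List.getLast?_reverse, hL]

lemma internal_append_reverseTrail (hM : B.IsTrailFrom v M) (hM0 : M ≠ []) :
    B.Internal (L ++ reverseTrail M) = L.map B.ohead ++ (B.Internal M).reverse := by
  have hM0' : M.map B.ohead ≠ [] := by simpa using hM0
  rw [internal_append (by simpa [reverseTrail] using hM0)]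
  simp [Internal, map_ohead_reverseTrail, hM.map_otail, List.dropLast_cons_of_ne_nil hM0']

lemma IsPathFrom.ohead_eq_of_fst_eq (hL : B.IsPathFrom r L) (hM : B.IsTrailFrom r M)
    (hmeet : ∀ w ∈ L.map B.ohead, w ∈ M.map B.ohead → w = v)
    (ha : a ∈ L) (hb : b ∈ M) (hab : a.1 = b.1) : B.ohead a = v := by
  refine hmeet _ (List.mem_map_of_mem ha) ?_
  rcases ohead_eq_or_ohead_eq_otail_of_fst_eq (B := B) hab with h | h
  · exact h ▸ List.mem_map_of_mem hb
  · rcases List.mem_cons.mp (hM.otail_mem hb) with h' | h'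
    · have hr := List.mem_map_of_mem (f := B.ohead) ha
      rw [h, h'] at hr
      exact absurd hr hL.notMem_map_ohead
    · exact h ▸ h'

lemma IsPathFrom.fst_ne_of_meet (hL : B.IsPathFrom r L) (hM : B.IsPathFrom r M)
    (ha : L.getLast? = some a) (hb : M.getLast? = some b) (hv : B.ohead a = B.ohead b)
    (hmeet : ∀ w ∈ L.map B.ohead, w ∈ M.map B.ohead → w = B.ohead a) (hab : a.1 ≠ b.1) :
    ∀ e ∈ L.map Prod.fst, ∀ f ∈ M.map Prod.fst, e ≠ f := by
  simp only [List.mem_map]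
  rintro _ ⟨a', ha', rfl⟩ _ ⟨b', hb', rfl⟩ he
  have hmeet' : ∀ w ∈ M.map B.ohead, w ∈ L.map B.ohead → w = B.ohead b :=
    fun w hw hw' => hv ▸ hmeet w hw' hw
  have h₁ : a' = a := hL.eq_of_ohead_eq ha' (List.mem_of_getLast? ha)
    (hL.ohead_eq_of_fst_eq hM.1 hmeet ha' hb' he)
  have h₂ : b' = b := hM.eq_of_ohead_eq hb' (List.mem_of_getLast? hb)
    (hM.ohead_eq_of_fst_eq hL.1 hmeet' hb' ha' he.symm)
  exact hab (h₁ ▸ h₂ ▸ he)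

/-- Otherwise `L` followed by `M` backwards would be a nontrivial almost path from `r` to `r`. -/
lemma Clean.sign_eq (hclean : B.Clean r) (hL : B.IsPathFrom r L) (hM : B.IsPathFrom r M)
    (ha : L.getLast? = some a) (hb : M.getLast? = some b) (hv : B.ohead a = B.ohead b)
    (hmeet : ∀ w ∈ L.map B.ohead, w ∈ M.map B.ohead → w = B.ohead a) :
    B.sign a.1 (B.ohead a) = B.sign b.1 (B.ohead a) := by
  by_contra hsign
  have hLM := hL.fst_ne_of_meet hM ha hb hv hmeet fun he => hsign (he ▸ rfl)
  have hM0 : M ≠ [] := by rintro rfl; simp at hb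
  have hend : B.trailEnd r L = B.trailEnd r M := by
    rw [trailEnd_of_getLast? ha, trailEnd_of_getLast? hb, hv]
  have htrail : B.IsTrailFrom r (L ++ reverseTrail M) := by
    refine isTrailFrom_append.mpr ⟨hL.1, hend ▸ hM.1.reverseTrail, ?_, ?_⟩
    · intro a' ha' b' hb'
      obtain rfl : a' = a := Option.some_injective _ (ha ▸ ha').symm
      obtain rfl : b' = (b.1, !b.2) := by
        simpa [reverseTrail, List.head?_reverse, List.getLast?_map, hb, eq_comm] using hb'
      exact ⟨by rw [otail_flip, hv], hsign⟩
    · simpa [map_fst_reverseTrail] using hLM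
  have hnodup : (r :: B.Internal (L ++ reverseTrail M)).Nodup := by
    rw [internal_append_reverseTrail hM.1 hM0, List.nodup_cons, List.nodup_append,
      List.nodup_reverse, List.mem_append, List.mem_reverse]
    refine ⟨not_or.mpr ⟨hL.notMem_map_ohead, hM.notMem_internal⟩, hL.nodup_map_ohead,
      hM.nodup_map_ohead.sublist internal_sublist, ?_⟩
    rintro w hw _ hw' rfl
    rw [List.mem_reverse] at hw'
    rw [hmeet w hw (internal_sublist.mem hw'), ← trailEnd_of_getLast? (v := r) ha, hend] at hw'
    exact hM.trailEnd_notMem_internal hw'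
  refine hclean ⟨L ++ reverseTrail M, by simp [reverseTrail, hM0], ⟨htrail, hnodup⟩, ?_⟩
  rw [trailEnd_append, hend, hM.1.trailEnd_reverseTrail]

lemma Clean.isPathFrom_append (hclean : B.Clean r) (hL : B.IsPathFrom r L)
    (hM : B.IsPathFrom r (M₁ ++ M₂)) (hL0 : L ≠ []) (hend : B.trailEnd r L = B.trailEnd r M₁)
    (hmeet : ∀ w ∈ L.map B.ohead, w ∈ (M₁ ++ M₂).map B.ohead → w = B.trailEnd r L) :
    B.IsPathFrom r (L ++ M₂) := by
  obtain ⟨-, htrail₂, hjoin, -⟩ := isTrailFrom_append.mp hM.1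
  obtain ⟨a, ha⟩ : ∃ a, L.getLast? = some a := ⟨_, List.getLast?_eq_some_getLast hL0⟩
  have hM₁0 : M₁ ≠ [] := by
    rintro rfl
    have hr := trailEnd_mem_map_ohead (B := B) (v := r) hL0
    rw [hend] at hr
    exact hL.notMem_map_ohead hr
  obtain ⟨b, hb⟩ : ∃ b, M₁.getLast? = some b := ⟨_, List.getLast?_eq_some_getLast hM₁0⟩
  have hv : B.ohead a = B.ohead b := by
    rwa [trailEnd_of_getLast? ha, trailEnd_of_getLast? hb] at hend
  have hsign := hclean.sign_eq hL hM.append_left ha hb hv fun w hw hw₁ =>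
    trailEnd_of_getLast? ha ▸ hmeet w hw (by simp [hw₁])
  have hvM₂ : B.ohead b ∉ M₂.map B.ohead := by
    have hnd := hM.nodup_map_ohead
    rw [List.map_append, List.nodup_append] at hnd
    exact fun h => hnd.2.2 _ (List.mem_map_of_mem (List.mem_of_getLast? hb)) _ h rfl
  have hdisj : ∀ w ∈ L.map B.ohead, w ∉ M₂.map B.ohead := fun w hw hw₂ => by
    rw [hmeet w hw (by simp [hw₂]), trailEnd_of_getLast? ha, hv] at hw₂
    exact hvM₂ hw₂
  refine ⟨isTrailFrom_append.mpr ⟨hL.1, hend ▸ htrail₂, ?_, ?_⟩, ?_⟩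
  · intro a' ha' c hc
    obtain rfl : a' = a := Option.some_injective _ (ha ▸ ha').symm
    obtain ⟨hbc, hsign'⟩ := hjoin b hb c hc
    exact ⟨hv ▸ hbc, by rwa [hsign, hv]⟩
  · simp only [List.mem_map]
    rintro _ ⟨a', ha', rfl⟩ _ ⟨c, hc, rfl⟩ he
    have hmeet' : ∀ w ∈ (M₁ ++ M₂).map B.ohead, w ∈ L.map B.ohead → w = B.trailEnd r L :=
      fun w hw hw' => hmeet w hw' hw
    have hcv := hM.ohead_eq_of_fst_eq hL.1 hmeet' (List.mem_append_right _ hc) ha' he.symm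
    exact hdisj _ (hcv ▸ trailEnd_mem_map_ohead hL0) (List.mem_map_of_mem hc)
  · rw [List.map_append, List.nodup_cons, List.nodup_append, List.mem_append]
    refine ⟨not_or.mpr ⟨hL.notMem_map_ohead, fun h => ?_⟩, hL.nodup_map_ohead, ?_, ?_⟩
    · exact hM.notMem_map_ohead (by simp [h])
    · exact (hM.nodup_map_ohead.sublist ((List.sublist_append_right _ _).map _))
    · exact fun w hw _ hw₂ hww => hdisj w hw (hww ▸ hw₂)

lemma Clean.isPathFrom_splice (hclean : B.Clean r)
    (hL : B.IsPathFrom r (L₁ ++ b :: L₂) ∧ B.trailEnd r (L₁ ++ b :: L₂) = x)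
    (hM : B.IsPathFrom r (M₁ ++ M₂) ∧ B.trailEnd r (M₁ ++ M₂) = x)
    (hM₁ : B.trailEnd r M₁ = B.ohead b) (hL₁ : ∀ a ∈ L₁, B.ohead a ∉ B.Internal (M₁ ++ M₂)) :
    B.IsPathFrom r (L₁ ++ [b] ++ M₂) ∧ B.trailEnd r (L₁ ++ [b] ++ M₂) = x := by
  have hpre : B.IsPathFrom r (L₁ ++ [b]) :=
    (by simpa using hL.1 : B.IsPathFrom r (L₁ ++ [b] ++ L₂)).append_left
  have hpre_end : B.trailEnd r (L₁ ++ [b]) = B.ohead b :=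
    trailEnd_of_getLast? List.getLast?_concat
  have hL₁M : ∀ a ∈ L₁, B.ohead a ∉ (M₁ ++ M₂).map B.ohead := by
    intro a ha haM
    have haL : B.ohead a ∈ B.Internal (L₁ ++ b :: L₂) := by
      rw [internal_append (List.cons_ne_nil _ _)]
      exact List.mem_append_left _ (List.mem_map_of_mem ha)
    refine hL₁ a ha (mem_internal_of_mem_map_ohead (v := r) haM fun h => ?_)
    rw [hM.2, ← hL.2] at h
    exact hL.1.trailEnd_notMem_internal (h ▸ haL)
  have hmeet : ∀ w ∈ (L₁ ++ [b]).map B.ohead, w ∈ (M₁ ++ M₂).map B.ohead →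
      w = B.trailEnd r (L₁ ++ [b]) := by
    intro w hw hwM
    rw [List.map_append, List.mem_append, List.map_singleton, List.mem_singleton] at hw
    rcases hw with hw | rfl
    · obtain ⟨a, ha, rfl⟩ := List.mem_map.mp hw
      exact absurd hwM (hL₁M a ha)
    · exact hpre_end.symm
  refine ⟨hclean.isPathFrom_append hpre hM.1 (by simp) (hpre_end.trans hM₁.symm) hmeet, ?_⟩
  rw [trailEnd_append, hpre_end, ← hM₁, ← trailEnd_append, hM.2]

def IsLinkage (B : BidirGraph V E) (r x : V) (Rs : List (List (E × Bool))) : Prop :=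
  (∀ L ∈ Rs, B.IsPathFrom r L ∧ B.trailEnd r L = x) ∧ Rs.Pairwise B.IntDisj

lemma IsLinkage.intDisj_get {Rs : List (List (E × Bool))} (h : B.IsLinkage r x Rs)
    {i j : Fin Rs.length} (hij : i ≠ j) : B.IntDisj (Rs.get i) (Rs.get j) := by
  rcases lt_or_gt_of_ne hij with hlt | hlt
  · exact List.pairwise_iff_get.mp h.2 i j hlt
  · exact (List.pairwise_iff_get.mp h.2 j i hlt).symm

lemma isLinkage_ofFn {k : ℕ} {Q : Fin k → List (E × Bool)}
    (hQ : ∀ i, B.IsPathFrom r (Q i) ∧ B.trailEnd r (Q i) = x)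
    (hQdisj : ∀ i j, i ≠ j → B.IntDisj (Q i) (Q j)) : B.IsLinkage r x (List.ofFn Q) :=
  ⟨by simpa using hQ, List.pairwise_ofFn.mpr fun i j hij => hQdisj i j hij.ne⟩

variable {ι : Type*} {P : ι → List (E × Bool)} {S T : List (List (E × Bool) × List (E × Bool))}
  {A D as bs : List (E × Bool)}

/-- An entry `(A, D)` encodes the path `A ++ D`, split after an initial segment taken from `P`. -/
def IsAnchoredLinkage (B : BidirGraph V E) (r x : V) (P : ι → List (E × Bool))
    (S : List (List (E × Bool) × List (E × Bool))) : Prop :=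
  B.IsLinkage r x (S.map fun s => s.1 ++ s.2) ∧ ∀ s ∈ S, s.1 = [] ∨ ∃ i, s.1.IsPrefix (P i)

lemma IsLinkage.isAnchoredLinkage {Rs : List (List (E × Bool))} (h : B.IsLinkage r x Rs) :
    B.IsAnchoredLinkage r x P (Rs.map fun L => ([], L)) := by
  simpa [IsAnchoredLinkage, Function.comp_def] using h

lemma isAnchoredLinkage_cons {s : List (E × Bool) × List (E × Bool)} :
    B.IsAnchoredLinkage r x P (s :: S) ↔ B.IsAnchoredLinkage r x P S ∧
      (B.IsPathFrom r (s.1 ++ s.2) ∧ B.trailEnd r (s.1 ++ s.2) = x) ∧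
      (s.1 = [] ∨ ∃ i, s.1.IsPrefix (P i)) ∧ ∀ t ∈ S, B.IntDisj (s.1 ++ s.2) (t.1 ++ t.2) := by
  simp only [IsAnchoredLinkage, IsLinkage, List.map_cons, List.mem_cons, forall_eq_or_imp,
    List.pairwise_cons, List.forall_mem_map]
  tauto

lemma IsAnchoredLinkage.perm (h : B.IsAnchoredLinkage r x P S) (hST : S.Perm T) :
    B.IsAnchoredLinkage r x P T :=
  ⟨⟨fun L hL => h.1.1 L ((hST.map _).mem_iff.mpr hL), (hST.map _).pairwise h.1.2 IntDisj.symm⟩,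
    fun s hs => h.2 s (hST.mem_iff.mpr hs)⟩

lemma ohead_mem_map_of_mem_internal_append
    (hP : ∀ i, B.IsPathFrom r (P i) ∧ B.trailEnd r (P i) = x)
    (hPdisj : ∀ i j, i ≠ j → B.IntDisj (P i) (P j))
    (hM : B.IsPathFrom r (A ++ D) ∧ B.trailEnd r (A ++ D) = x)
    (hA : A = [] ∨ ∃ j, A.IsPrefix (P j)) {i : ι} (hi : (A ++ D).head? ≠ (P i).head?)
    (hb : b ∈ P i) (hv : B.ohead b ∈ B.Internal (A ++ D)) : B.ohead b ∈ D.map B.ohead := by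
  have hvx : B.ohead b ≠ x := fun h => hM.1.trailEnd_notMem_internal (hM.2 ▸ h ▸ hv)
  have hvM := internal_sublist.mem hv
  rw [List.map_append, List.mem_append] at hvM
  refine hvM.resolve_left fun hvA => ?_
  obtain ⟨j, A', hPj⟩ := hA.resolve_left (by rintro rfl; simp at hvA)
  by_cases hji : j = i
  · subst hji
    cases A with
    | nil => simp at hvA
    | cons a A => simp [← hPj] at hi
  · have hvj : B.ohead b ∈ B.Internal (P j) :=
      mem_internal_of_mem_map_ohead (by simp [← hPj, hvA]) ((hP j).2 ▸ hvx)
    have hvi : B.ohead b ∈ B.Internal (P i) :=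
      mem_internal_of_mem_map_ohead (List.mem_map_of_mem hb) ((hP i).2 ▸ hvx)
    exact hPdisj j i hji _ hvj hvi

lemma IsAnchoredLinkage.exists_splice (hclean : B.Clean r)
    (hP : ∀ i, B.IsPathFrom r (P i) ∧ B.trailEnd r (P i) = x)
    (hPdisj : ∀ i j, i ≠ j → B.IntDisj (P i) (P j))
    (hS : B.IsAnchoredLinkage r x P ((A, D) :: T)) {i : ι} (hi : (A ++ D).head? ≠ (P i).head?)
    (hPi : P i = as ++ b :: bs) (hb : B.ohead b ∈ B.Internal (A ++ D))
    (has : ∀ a ∈ as, ∀ s ∈ (A, D) :: T, B.ohead a ∉ B.Internal (s.1 ++ s.2)) :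
    ∃ D', D'.length < D.length ∧ B.IsAnchoredLinkage r x P ((as ++ [b], D') :: T) ∧
      (as ++ [b] ++ D').getLast? = (A ++ D).getLast? := by
  obtain ⟨hT, hM, hA, hdisjT⟩ := isAnchoredLinkage_cons.mp hS
  obtain ⟨d, hd, hdv⟩ := List.mem_map.mp
    (ohead_mem_map_of_mem_internal_append hP hPdisj hM hA hi (by simp [hPi]) hb)
  obtain ⟨D₁, D₂, rfl⟩ := List.append_of_mem hd
  have has₀ : ∀ a ∈ as, B.ohead a ∉ B.Internal (A ++ (D₁ ++ d :: D₂)) :=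
    fun a ha => has a ha _ List.mem_cons_self
  have hsplit : A ++ (D₁ ++ d :: D₂) = A ++ D₁ ++ [d] ++ D₂ := by simp
  rw [hsplit] at hM hb hdisjT has₀ ⊢
  have hMend : B.trailEnd r (A ++ D₁ ++ [d]) = B.ohead b :=
    (trailEnd_of_getLast? List.getLast?_concat).trans hdv
  have hD₂ : D₂ ≠ [] := by
    rintro rfl
    rw [List.append_nil] at hM hb
    exact hM.1.trailEnd_notMem_internal (hMend ▸ hb)
  refine ⟨D₂, by simp; omega, isAnchoredLinkage_cons.mpr ⟨hT,
    hclean.isPathFrom_splice (hPi ▸ hP i) hM hMend has₀, Or.inr ⟨i, by simp [hPi]⟩,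
    fun t ht w hw hwt => ?_⟩, ?_⟩
  · simp only [internal_append hD₂, List.map_append, List.map_singleton, List.mem_append,
      List.mem_singleton, List.mem_map] at hw
    rcases hw with (⟨a, ha, rfl⟩ | rfl) | hw
    · exact has a ha t (List.mem_cons_of_mem _ ht) hwt
    · exact hdisjT t ht _ hb hwt
    · exact hdisjT t ht _ (by rw [internal_append hD₂]; exact List.mem_append_right _ hw) hwt
  · obtain ⟨c, hc⟩ : ∃ c, D₂.getLast? = some c := ⟨_, List.getLast?_eq_some_getLast hD₂⟩
    simp only [List.getLast?_append, hc, Option.some_or]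

lemma IsAnchoredLinkage.cons_of_notMem_internal (hS : B.IsAnchoredLinkage r x P S) {i : ι}
    (hPi : B.IsPathFrom r (P i) ∧ B.trailEnd r (P i) = x)
    (hmiss : ∀ a ∈ P i, ∀ s ∈ S, B.ohead a ∉ B.Internal (s.1 ++ s.2)) :
    B.IsAnchoredLinkage r x P ((P i, []) :: S) := by
  refine isAnchoredLinkage_cons.mpr ⟨hS, by simpa using hPi, Or.inr ⟨i, List.prefix_refl _⟩,
    fun t ht w hw hwt => ?_⟩
  obtain ⟨a, ha, rfl⟩ := List.mem_map.mp (internal_sublist.mem (by simpa using hw))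
  exact hmiss a ha t ht hwt

def restLength (S : List (List (E × Bool) × List (E × Bool))) : ℕ :=
  (S.map fun s => s.2.length).sum

def uncovered (P : ι → List (E × Bool)) (S : List (List (E × Bool) × List (E × Bool))) : Set ι :=
  {i | ∀ s ∈ S, (s.1 ++ s.2).head? ≠ (P i).head?}

noncomputable def potential (P : ι → List (E × Bool))
    (S : List (List (E × Bool) × List (E × Bool))) : ℕ × ℕ :=
  (restLength S, (uncovered P S).ncard)

lemma IsAnchoredLinkage.exists_step [Finite ι] (hclean : B.Clean r)
    (hP : ∀ i, B.IsPathFrom r (P i) ∧ B.trailEnd r (P i) = x)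
    (hPdisj : ∀ i j, i ≠ j → B.IntDisj (P i) (P j))
    (hS : B.IsAnchoredLinkage r x P S) {i : ι} (hi : i ∈ uncovered P S) :
    ∃ S', B.IsAnchoredLinkage r x P S' ∧ Prod.Lex (· < ·) (· < ·) (potential P S') (potential P S) ∧
      ∀ s ∈ S, ∃ s' ∈ S', (s'.1 ++ s'.2).getLast? = (s.1 ++ s.2).getLast? := by
  by_cases hhit : ∃ a ∈ P i, ∃ s ∈ S, B.ohead a ∈ B.Internal (s.1 ++ s.2)
  · obtain ⟨as, b, bs, hPi, ⟨s₀, hs₀, hb⟩, has⟩ := List.exists_eq_append_cons_of_exists hhit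
    obtain ⟨S₁, S₂, rfl⟩ := List.append_of_mem hs₀
    have hperm : (S₁ ++ s₀ :: S₂).Perm (s₀ :: (S₁ ++ S₂)) := List.perm_middle
    obtain ⟨D', hlen, hS', hlast⟩ := (hS.perm hperm).exists_splice hclean hP hPdisj
      (hi s₀ hs₀) hPi hb fun a ha s hs h => has a ha ⟨s, hperm.mem_iff.mpr hs, h⟩
    refine ⟨_, hS', Prod.Lex.left _ _ ?_, fun s hs => ?_⟩
    · simp only [restLength, (hperm.map _).sum_eq, List.map_cons, List.sum_cons]
      omega
    · rcases List.mem_cons.mp (hperm.mem_iff.mp hs) with rfl | hs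
      · exact ⟨_, List.mem_cons_self, hlast⟩
      · exact ⟨s, List.mem_cons_of_mem _ hs, rfl⟩
  · push Not at hhit
    refine ⟨_, hS.cons_of_notMem_internal (hP i) hhit, ?_,
      fun s hs => ⟨s, List.mem_cons_of_mem _ hs, rfl⟩⟩
    have hsub : uncovered P ((P i, []) :: S) ⊂ uncovered P S :=
      (Set.ssubset_iff_of_subset fun j (hj : ∀ s ∈ _ :: S, _) s hs =>
        hj s (List.mem_cons_of_mem _ hs)).mpr ⟨i, hi, fun hi' => hi' _ List.mem_cons_self (by simp)⟩
    simpa [potential, restLength] using Prod.Lex.right _ (Set.ncard_lt_ncard hsub)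

theorem IsAnchoredLinkage.exists_linkage [Finite ι] (hclean : B.Clean r)
    (hP : ∀ i, B.IsPathFrom r (P i) ∧ B.trailEnd r (P i) = x)
    (hPdisj : ∀ i j, i ≠ j → B.IntDisj (P i) (P j)) (hS : B.IsAnchoredLinkage r x P S) :
    ∃ Rs, B.IsLinkage r x Rs ∧ (∀ i, ∃ L ∈ Rs, L.head? = (P i).head?) ∧
      ∀ s ∈ S, ∃ L ∈ Rs, L.getLast? = (s.1 ++ s.2).getLast? := by
  induction S using (InvImage.wf (potential P)
    (WellFounded.prod_lex wellFounded_lt wellFounded_lt)).induction with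
  | _ S ih =>
  by_cases hcov : uncovered P S = ∅
  · refine ⟨S.map fun s => s.1 ++ s.2, hS.1, fun i => ?_,
      fun s hs => ⟨_, List.mem_map_of_mem hs, rfl⟩⟩
    have hi : i ∉ uncovered P S := hcov ▸ Set.notMem_empty i
    simpa [uncovered] using hi
  · obtain ⟨i, hi⟩ := Set.nonempty_iff_ne_empty.mpr hcov
    obtain ⟨S', hS', hlt, hlast⟩ := hS.exists_step hclean hP hPdisj hi
    obtain ⟨Rs, hRs, hheads, hlasts⟩ := ih S' hlt hS'
    refine ⟨Rs, hRs, hheads, fun s hs => ?_⟩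
    obtain ⟨s', hs', hss'⟩ := hlast s hs
    obtain ⟨L, hL, hLs'⟩ := hlasts s' hs'
    exact ⟨L, hL, hLs'.trans hss'⟩

end BidirGraph

open BidirGraph in
theorem stmt19_general {V E : Type} (B : BidirGraph V E) (r : V)
    (hclean : B.Clean r) (x : V)
    (m k : ℕ) (P : Fin m → List (E × Bool)) (Q : Fin k → List (E × Bool))
    (hP : ∀ i, B.IsPathFrom r (P i) ∧ B.trailEnd r (P i) = x)
    (hPdisj : ∀ i j, i ≠ j → B.IntDisj (P i) (P j))
    (hQ : ∀ i, B.IsPathFrom r (Q i) ∧ B.trailEnd r (Q i) = x)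
    (hQdisj : ∀ i j, i ≠ j → B.IntDisj (Q i) (Q j)) :
    ∃ (n : ℕ) (R : Fin n → List (E × Bool)),
      (∀ i, B.IsPathFrom r (R i) ∧ B.trailEnd r (R i) = x) ∧
      (∀ i j, i ≠ j → B.IntDisj (R i) (R j)) ∧
      (∀ i, ∀ oe ∈ (P i).head?, ∃ j, (R j).head? = some oe) ∧
      (∀ i, ∀ oe ∈ (Q i).getLast?, ∃ j, (R j).getLast? = some oe) := by
  obtain ⟨Rs, hRs, hheads, hlasts⟩ :=
    ((isLinkage_ofFn hQ hQdisj).isAnchoredLinkage (P := P)).exists_linkage hclean hP hPdisj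
  refine ⟨Rs.length, Rs.get, fun j => hRs.1 _ (List.get_mem _ _),
    fun _ _ => hRs.intDisj_get, fun i oe hoe => ?_, fun i oe hoe => ?_⟩
  · obtain ⟨L, hL, hLP⟩ := hheads i
    obtain ⟨j, rfl⟩ := List.get_of_mem hL
    exact ⟨j, hLP.trans hoe⟩
  · obtain ⟨L, hL, hLQ⟩ := hlasts ([], Q i) (by simp)
    obtain ⟨j, rfl⟩ := List.get_of_mem hL
    exact ⟨j, hLQ.trans hoe⟩

open BidirGraph in
/-- Pym's theorem for internally vertex-disjoint paths in clean bidirected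
graphs: given families `P`, `Q` of pairwise internally vertex-disjoint `r`–`x` paths,
there is such a family `R` covering all first edges of `P` and all last edges of `Q`. -/
theorem stmt19 {V E : Type} (B : BidirGraph V E) (r : V)
    (hclean : B.Clean r) (x : V) (hx : x ≠ r)
    (m k : ℕ) (P : Fin m → List (E × Bool)) (Q : Fin k → List (E × Bool))
    (hP : ∀ i, B.IsPathFrom r (P i) ∧ B.trailEnd r (P i) = x)
    (hPdisj : ∀ i j, i ≠ j → B.IntDisj (P i) (P j))
    (hQ : ∀ i, B.IsPathFrom r (Q i) ∧ B.trailEnd r (Q i) = x)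
    (hQdisj : ∀ i j, i ≠ j → B.IntDisj (Q i) (Q j)) :
    ∃ (n : ℕ) (R : Fin n → List (E × Bool)),
      (∀ i, B.IsPathFrom r (R i) ∧ B.trailEnd r (R i) = x) ∧
      (∀ i j, i ≠ j → B.IntDisj (R i) (R j)) ∧
      (∀ i, ∀ oe ∈ (P i).head?, ∃ j, (R j).head? = some oe) ∧
      (∀ i, ∀ oe ∈ (Q i).getLast?, ∃ j, (R j).getLast? = some oe) :=
  stmt19_general B r hclean x m k P Q hP hPdisj hQ hQdisj
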